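/- Let f : X → Y be a coarse equivalence between metric spaces. Then a subset A ⊆ X is small in X if and only if its image f(A) is small in Y. -/

import Mathlib

open Metric Set

/-- A subset `L` of a metric space is *large* if some `r`-neighborhood of `L` is the whole space. -/
def IsLarge {X : Type*} [MetricSpace X] (L : Set X) : Prop :=
  ∃ r > (0 : ℝ), ∀ x : X, ∃ y ∈ L, dist x y < r

/-- A subset `A` of a metric space is *small* if for every large set `L` the set `L \\ A` is large. -/
def IsSmall {X : Type*} [MetricSpace X] (A : Set X) : Prop :=
  ∀ L : Set X, IsLarge L → IsLarge (L \ A)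

/-- `AsdimLE X n` means the asymptotic dimension of `X` is at most `n`: for every `r > 0`
there are `D > 0` and a cover of `X` by sets of diameter at most `D` such that every open
`r`-ball meets at most `n + 1` members of the cover. -/
def AsdimLE (X : Type*) [MetricSpace X] (n : ℕ) : Prop :=
  ∀ r > (0 : ℝ), ∃ D > (0 : ℝ), ∃ U : Set (Set X),
    ⋃₀ U = univ ∧
    (∀ u ∈ U, EMetric.diam u ≤ ENNReal.ofReal D) ∧
    ∀ x : X, {u ∈ U | (u ∩ Metric.ball x r).Nonempty}.Finite ∧
      {u ∈ U | (u ∩ Metric.ball x r).Nonempty}.ncard ≤ n + 1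

/-- A map between metric spaces is *coarse* if it maps pairs at bounded distance to
pairs at bounded distance. -/
def IsCoarseMap {X Y : Type*} [MetricSpace X] [MetricSpace Y] (f : X → Y) : Prop :=
  ∀ R > (0 : ℝ), ∃ S > (0 : ℝ), ∀ x x' : X, dist x x' ≤ R → dist (f x) (f x') ≤ S

/-- A coarse map `f : X → Y` is a *coarse equivalence* if it has a coarse inverse up to
uniformly bounded distance. -/
def IsCoarseEquiv {X Y : Type*} [MetricSpace X] [MetricSpace Y] (f : X → Y) : Prop :=
  IsCoarseMap f ∧ ∃ g : Y → X, IsCoarseMap g ∧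
    (∃ C : ℝ, ∀ x : X, dist x (g (f x)) ≤ C) ∧
    (∃ C : ℝ, ∀ y : Y, dist y (f (g y)) ≤ C)

/-!
A set `A` is small exactly when, for every `t > 0`, the points at distance at least `t` from `A`
(the complement of the open `t`-thickening of `A`) form a large set. A coarse equivalence `f`
maps large sets to large sets and pulls uniformly bounded distances back to uniformly bounded
distances, so it carries points far from `A` to points far from `f '' A`; hence images of small
sets are small. Applying this to a coarse inverse `g` shows that `g '' (f '' A)` is small, and
`A` lies in a bounded thickening of that set.
-/

section

variable {X Y : Type*} [MetricSpace X] [MetricSpace Y]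

lemma IsLarge.mono {L L' : Set X} (hL : IsLarge L) (h : L ⊆ L') : IsLarge L' := by
  obtain ⟨r, hr, hL⟩ := hL
  refine ⟨r, hr, fun x => ?_⟩
  obtain ⟨y, hy, hxy⟩ := hL x
  exact ⟨y, h hy, hxy⟩

lemma IsLarge.of_subset_thickening {M L : Set X} (hM : IsLarge M) {r : ℝ} (hr : 0 < r)
    (h : M ⊆ thickening r L) : IsLarge L := by
  obtain ⟨ρ, hρ, hM⟩ := hM
  refine ⟨ρ + r, by linarith, fun x => ?_⟩
  obtain ⟨m, hm, hxm⟩ := hM x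
  obtain ⟨y, hy, hmy⟩ := mem_thickening_iff.1 (h hm)
  exact ⟨y, hy, (dist_triangle x m y).trans_lt (add_lt_add hxm hmy)⟩

lemma IsLarge.image {L : Set X} (hL : IsLarge L) {f : X → Y} (hf : IsCoarseMap f) {C : ℝ}
    (hdense : ∀ y, ∃ x, dist y (f x) ≤ C) : IsLarge (f '' L) := by
  obtain ⟨ρ, hρ, hL⟩ := hL
  obtain ⟨S, hS, hfS⟩ := hf ρ hρ
  refine ⟨|C| + S + 1, by positivity, fun y => ?_⟩
  obtain ⟨x, hyx⟩ := hdense y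
  obtain ⟨l, hl, hxl⟩ := hL x
  refine ⟨f l, mem_image_of_mem f hl, ?_⟩
  calc dist y (f l) ≤ dist y (f x) + dist (f x) (f l) := dist_triangle _ _ _
    _ ≤ |C| + S := add_le_add (hyx.trans (le_abs_self C)) (hfS x l hxl.le)
    _ < |C| + S + 1 := lt_add_one _

theorem isSmall_iff_forall_isLarge_compl_thickening {A : Set X} :
    IsSmall A ↔ ∀ t > 0, IsLarge (thickening t A)ᶜ := by
  constructor
  · intro hA t ht
    have hL : IsLarge (A ∪ (thickening t A)ᶜ) := by
      refine ⟨t, ht, fun x => ?_⟩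
      by_cases hx : x ∈ thickening t A
      · obtain ⟨a, ha, hxa⟩ := mem_thickening_iff.1 hx
        exact ⟨a, Or.inl ha, hxa⟩
      · exact ⟨x, Or.inr hx, by simpa using ht⟩
    refine (hA _ hL).mono ?_
    rintro x ⟨hx | hx, hxA⟩
    exacts [absurd hx hxA, hx]
  · rintro h L ⟨r, hr, hL⟩
    refine (h r hr).of_subset_thickening hr fun m hm => ?_
    obtain ⟨l, hl, hml⟩ := hL m
    have hlA : l ∉ A := fun hlA => hm (mem_thickening_iff.2 ⟨l, hlA, hml⟩)
    exact mem_thickening_iff.2 ⟨l, ⟨hl, hlA⟩, hml⟩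

lemma IsSmall.mono {A B : Set X} (hB : IsSmall B) (h : A ⊆ B) : IsSmall A :=
  fun L hL => (hB L hL).mono (sdiff_subset_sdiff_right h)

lemma IsSmall.thickening {A : Set X} (hA : IsSmall A) {r : ℝ} (hr : 0 < r) :
    IsSmall (thickening r A) := by
  rw [isSmall_iff_forall_isLarge_compl_thickening] at hA ⊢
  intro t ht
  exact (hA (t + r) (by linarith)).mono
    (compl_subset_compl.2 (thickening_thickening_subset t r A))

lemma IsCoarseEquiv.exists_inverse {f : X → Y} (hf : IsCoarseEquiv f) :
    ∃ g : Y → X, IsCoarseEquiv g ∧ ∃ C : ℝ, ∀ x, dist x (g (f x)) ≤ C := by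
  obtain ⟨hf, g, hg, hgf, hfg⟩ := hf
  exact ⟨g, ⟨hg, f, hf, hfg, hgf⟩, hgf⟩

lemma IsCoarseEquiv.exists_dist_le_of_dist_map_le {f : X → Y} (hf : IsCoarseEquiv f) :
    ∀ R > 0, ∃ S > 0, ∀ x x', dist (f x) (f x') ≤ R → dist x x' ≤ S := by
  obtain ⟨-, g, hg, ⟨C, hC⟩, -⟩ := hf
  intro R hR
  obtain ⟨S, hS, hgS⟩ := hg R hR
  refine ⟨2 * |C| + S, by positivity, fun x x' hxx' => ?_⟩
  calc dist x x' ≤ dist x (g (f x)) + dist (g (f x)) (g (f x')) + dist (g (f x')) x' :=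
        dist_triangle4 _ _ _ _
    _ ≤ |C| + S + |C| := by
        gcongr
        · exact (hC x).trans (le_abs_self C)
        · exact hgS _ _ hxx'
        · exact (dist_comm (g (f x')) x' ▸ hC x').trans (le_abs_self C)
    _ = 2 * |C| + S := by ring

lemma IsSmall.image {A : Set X} (hA : IsSmall A) {f : X → Y} (hf : IsCoarseEquiv f) :
    IsSmall (f '' A) := by
  rw [isSmall_iff_forall_isLarge_compl_thickening] at hA ⊢
  intro t ht
  obtain ⟨S, hS, hproper⟩ := hf.exists_dist_le_of_dist_map_le t ht
  obtain ⟨hfc, g, -, -, C, hC⟩ := hf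
  have hfar : f '' (Metric.thickening (S + 1) A)ᶜ ⊆ (Metric.thickening t (f '' A))ᶜ := by
    rintro _ ⟨x, hx, rfl⟩ hfx
    obtain ⟨_, ⟨a, ha, rfl⟩, hxa⟩ := mem_thickening_iff.1 hfx
    have : dist x a ≤ S := hproper x a hxa.le
    exact hx (mem_thickening_iff.2 ⟨a, ha, by linarith⟩)
  exact ((hA (S + 1) (by linarith)).image hfc fun y => ⟨g y, hC y⟩).mono hfar

end

theorem small_iff_image_small {X Y : Type*} [MetricSpace X] [MetricSpace Y]
    (f : X → Y) (hf : IsCoarseEquiv f) (A : Set X) :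
    IsSmall A ↔ IsSmall (f '' A) := by
  refine ⟨fun hA => hA.image hf, fun hfA => ?_⟩
  obtain ⟨g, hg, C, hC⟩ := hf.exists_inverse
  have hA : A ⊆ thickening (|C| + 1) (g '' (f '' A)) := fun a ha =>
    mem_thickening_iff.2 ⟨g (f a), mem_image_of_mem g (mem_image_of_mem f ha),
      (hC a).trans_lt (by linarith [le_abs_self C])⟩
  exact ((hfA.image hg).thickening (by positivity)).mono hA
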